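/- arXiv:1607.02844 — 4 statements merged into one kernel-verified Lean document; each statement's English description precedes it below -/
import Mathlib

section
/- Let V be a group and π : V → A6 a surjective group homomorphism whose kernel is a central subgroup of V of order 3, and for a tuple (g_1,…,g_k) of order-2 elements of A6 let γ(g_1,…,g_k) := ĝ_1 ĝ_2 ⋯ ĝ_k ∈ V, where ĝ_i is the canonical order-2 lift of g_i. Then γ is invariant under the Hurwitz moves: if (h_1,…,h_k) is obtained from (g_1,…,g_k) by a Hurwitz move, then γ(h_1,…,h_k) = γ(g_1,…,g_k). -/
/-- The `i`-th Hurwitz move on `k`-tuples of elements of a group `G`: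
`(g₁,…,gₖ) ↦ (g₁,…,g_{i-1}, g_{i+1}, g_{i+1}⁻¹ g_i g_{i+1}, g_{i+2},…,gₖ)`. -/
def HurwitzMove {G : Type*} [Group G] {k : ℕ} (g h : Fin k → G) : Prop :=
  ∃ i : ℕ, ∃ hi : i + 1 < k,
    h ⟨i, Nat.lt_of_succ_lt hi⟩ = g ⟨i + 1, hi⟩ ∧
    h ⟨i + 1, hi⟩ = (g ⟨i + 1, hi⟩)⁻¹ * g ⟨i, Nat.lt_of_succ_lt hi⟩ * g ⟨i + 1, hi⟩ ∧
    ∀ j : Fin k, (j : ℕ) ≠ i → (j : ℕ) ≠ i + 1 → h j = g j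

/-- Hurwitz equivalence: the equivalence relation generated by the Hurwitz moves. -/
def HurwitzEquiv {G : Type*} [Group G] {k : ℕ} (g h : Fin k → G) : Prop :=
  Relation.EqvGen HurwitzMove g h

/-- The Nielsen class `Ni(A₆, C_{2×2}^k)`: `k`-tuples of order-2 elements of `A₆`
(products of two disjoint transpositions) with product `1` generating `A₆`. -/
def NielsenSet (k : ℕ) : Set (Fin k → Equiv.Perm (Fin 6)) :=
  {g | (∀ i, g i ∈ alternatingGroup (Fin 6)) ∧ (∀ i, orderOf (g i) = 2) ∧
       (List.ofFn g).prod = 1 ∧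
       Subgroup.closure (Set.range g) = alternatingGroup (Fin 6)}

/-- One step of the absolute equivalence: a Hurwitz move, or simultaneous
conjugation of all entries by a single element of `S₆`. -/
def AbsRel (k : ℕ) (g h : Fin k → Equiv.Perm (Fin 6)) : Prop :=
  HurwitzMove g h ∨ ∃ s : Equiv.Perm (Fin 6), h = fun i => s⁻¹ * g i * s

/-- One step of the inner equivalence: a Hurwitz move, or simultaneous
conjugation of all entries by a single element of `A₆`. -/
def InnerRel (k : ℕ) (g h : Fin k → Equiv.Perm (Fin 6)) : Prop :=
  HurwitzMove g h ∨
    ∃ s ∈ alternatingGroup (Fin 6), h = fun i => s⁻¹ * g i * s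

/-- The set of fixed points of a permutation. -/
def FixedPts {n : ℕ} (g : Equiv.Perm (Fin n)) : Set (Fin n) := {x | g x = x}

/-! If `v, w` are involutions with `π v = π w`, then `z = v w⁻¹` lies in the central kernel, so
`1 = v² = z² w² = z²`; as the kernel has odd order, `z = 1`. Hence the order-2 lift is unique and
commutes with conjugation, so a Hurwitz move of the `gᵢ` lifts to a Hurwitz move of the `ĝᵢ`, and
Hurwitz moves preserve the product of a tuple. -/

theorem List.prod_ofFn_eq_of_eq_off_adjacent {M : Type*} [Monoid M] {k : ℕ} {f f' : Fin k → M}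
    (i : ℕ) (hi : i + 1 < k)
    (hpair : f' ⟨i, Nat.lt_of_succ_lt hi⟩ * f' ⟨i + 1, hi⟩ =
      f ⟨i, Nat.lt_of_succ_lt hi⟩ * f ⟨i + 1, hi⟩)
    (hrest : ∀ j : Fin k, (j : ℕ) ≠ i → (j : ℕ) ≠ i + 1 → f' j = f j) :
    (List.ofFn f').prod = (List.ofFn f).prod := by
  have split : ∀ f : Fin k → M, (List.ofFn f).prod = ((List.ofFn f).take i).prod *
      (f ⟨i, Nat.lt_of_succ_lt hi⟩ * f ⟨i + 1, hi⟩) * ((List.ofFn f).drop (i + 2)).prod := by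
    intro f
    rw [← List.prod_take_mul_prod_drop _ (i + 2), List.prod_take_succ _ _ (by simpa),
      List.prod_take_succ _ _ (by simp; omega)]
    simp [mul_assoc]
  have htake : (List.ofFn f').take i = (List.ofFn f).take i :=
    List.ext_getElem (by simp) fun j hj _ => by
      simp only [List.length_take, List.length_ofFn] at hj
      simp only [List.getElem_take, List.getElem_ofFn]
      exact hrest _ (by simp; omega) (by simp; omega)
  have hdrop : (List.ofFn f').drop (i + 2) = (List.ofFn f).drop (i + 2) :=
    List.ext_getElem (by simp) fun j hj _ => by
      simp only [List.getElem_drop, List.getElem_ofFn]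
      exact hrest _ (by simp; omega) (by simp; omega)
  rw [split f, split f', htake, hdrop, hpair]

namespace HurwitzMove

variable {G H : Type*} [Group G] [Group H] {k : ℕ} {g h : Fin k → G}

theorem prod_ofFn_eq (hmove : HurwitzMove g h) : (List.ofFn h).prod = (List.ofFn g).prod := by
  obtain ⟨i, hi, hleft, hright, hrest⟩ := hmove
  exact List.prod_ofFn_eq_of_eq_off_adjacent i hi (by rw [hleft, hright]; group) hrest

theorem comp {f : G → H} (hf : ∀ i j, f ((g j)⁻¹ * g i * g j) = (f (g j))⁻¹ * f (g i) * f (g j))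
    (hmove : HurwitzMove g h) : HurwitzMove (f ∘ g) (f ∘ h) := by
  obtain ⟨i, hi, hleft, hright, hrest⟩ := hmove
  exact ⟨i, hi, by simp [hleft], by simp [hright, hf], fun j h1 h2 => by simp [hrest j h1 h2]⟩

end HurwitzMove

section Lifts

variable {V G : Type*} [Group V] [Group G] (π : V →* G)

theorem MonoidHom.eq_of_map_eq_of_sq_eq_one (hcent : π.ker ≤ Subgroup.center V)
    (hodd : Odd (Nat.card π.ker)) {v w : V} (hvw : π v = π w) (hv : v ^ 2 = 1)
    (hw : w ^ 2 = 1) : v = w := by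
  set z := v * w⁻¹
  have hz : z ∈ π.ker := by simp [z, MonoidHom.mem_ker, hvw]
  have hsq : z ^ 2 = 1 := by
    have hcomm : Commute z w := (Subgroup.mem_center_iff.mp (hcent hz) w).symm
    have h := hcomm.mul_pow 2
    rwa [show z * w = v by simp [z], hv, hw, mul_one, eq_comm] at h
  have horder : orderOf (⟨z, hz⟩ : π.ker) ∣ Nat.gcd 2 (Nat.card π.ker) :=
    Nat.dvd_gcd (orderOf_dvd_of_pow_eq_one (Subtype.ext hsq)) (orderOf_dvd_natCard _)
  rw [(Nat.coprime_two_left.mpr hodd).gcd_eq_one, Nat.dvd_one, orderOf_eq_one_iff,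
    Subgroup.mk_eq_one] at horder
  exact mul_inv_eq_one.mp horder

theorem MonoidHom.eq_conj_of_sq_eq_one (hcent : π.ker ≤ Subgroup.center V)
    (hodd : Odd (Nat.card π.ker)) {u v w : V} (hu : π u = (π w)⁻¹ * π v * π w)
    (hu2 : u ^ 2 = 1) (hv2 : v ^ 2 = 1) : u = w⁻¹ * v * w := by
  refine π.eq_of_map_eq_of_sq_eq_one hcent hodd (by simp [hu]) hu2 ?_
  simpa using ((SemiconjBy.conj_mk w⁻¹ v).pow_right 2).eq_one_iff.mp hv2

end Lifts

theorem stmt_5_general {V : Type*} [Group V] (π : V →* ↥(alternatingGroup (Fin 6)))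
    (hcent : π.ker ≤ Subgroup.center V)
    (hker : Nat.card π.ker = 3)
    (lift : ↥(alternatingGroup (Fin 6)) → V)
    (hlift : ∀ x, orderOf x = 2 → π (lift x) = x ∧ orderOf (lift x) = 2)
    {k : ℕ} (g h : Fin k → ↥(alternatingGroup (Fin 6)))
    (hg : ∀ i, orderOf (g i) = 2)
    (hmove : HurwitzMove g h) :
    (List.ofFn fun i => lift (h i)).prod = (List.ofFn fun i => lift (g i)).prod := by
  have hodd : Odd (Nat.card π.ker) := by rw [hker]; decide
  have hsq : ∀ x, orderOf x = 2 → lift x ^ 2 = 1 := fun x hx => by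
    rw [← (hlift x hx).2]; exact pow_orderOf_eq_one _
  have hconj : ∀ i j, lift ((g j)⁻¹ * g i * g j) = (lift (g j))⁻¹ * lift (g i) * lift (g j) := by
    intro i j
    have hord : orderOf ((g j)⁻¹ * g i * g j) = 2 := by
      simpa [hg i] using ((SemiconjBy.conj_mk (g j)⁻¹ (g i)).orderOf_eq).symm
    refine π.eq_conj_of_sq_eq_one hcent hodd ?_ (hsq _ hord) (hsq _ (hg i))
    rw [(hlift _ hord).1, (hlift _ (hg i)).1, (hlift _ (hg j)).1]
  exact (hmove.comp hconj).prod_ofFn_eq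

/-- The lifting invariant `γ(g₁,…,g_k) = ĝ₁⋯ĝ_k` (product of canonical order-2
lifts to a central triple cover `V` of `A₆`) is invariant under Hurwitz moves. -/
theorem stmt_5 {V : Type*} [Group V] (π : V →* ↥(alternatingGroup (Fin 6)))
    (hsurj : Function.Surjective π)
    (hcent : π.ker ≤ Subgroup.center V)
    (hker : Nat.card π.ker = 3)
    (lift : ↥(alternatingGroup (Fin 6)) → V)
    (hlift : ∀ x, orderOf x = 2 → π (lift x) = x ∧ orderOf (lift x) = 2)
    {k : ℕ} (g h : Fin k → ↥(alternatingGroup (Fin 6)))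
    (hg : ∀ i, orderOf (g i) = 2)
    (hmove : HurwitzMove g h) :
    (List.ofFn fun i => lift (h i)).prod = (List.ofFn fun i => lift (g i)).prod :=
  stmt_5_general π hcent hker lift hlift g h hg hmove
end

section
/- Let V be a group and π : V → A6 a surjective group homomorphism whose kernel is a central subgroup of V of order 3, and for a tuple (g_1,…,g_k) of order-2 elements of A6 let γ(g_1,…,g_k) := ĝ_1 ĝ_2 ⋯ ĝ_k ∈ V, where ĝ_i is the canonical order-2 lift of g_i. If g_1 g_2 ⋯ g_k = 1, then for every t ∈ A6 one has γ(t^{-1} g_1 t, …, t^{-1} g_k t) = γ(g_1,…,g_k); that is, the lifting invariant is invariant under the inner action (simultaneous conjugation by elements of A6). -/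
/-!
The kernel of `π` is central of odd order, so an element of order 2 of `A₆` has exactly one
preimage of order 2: two such preimages differ by a central element whose square is 1. Hence,
for `π τ = t`, the canonical lift of `t⁻¹ g t` is `τ⁻¹ ĝ τ`, and `γ` of the conjugated tuple is
`τ⁻¹ γ τ`. When `g₁ ⋯ g_k = 1` the product `γ` lies in the kernel, which is central, so
conjugating it by `τ` does nothing.
-/

lemma orderOf_inv_mul_mul {G : Type*} [Group G] (s x : G) :
    orderOf (s⁻¹ * x * s) = orderOf x := by
  simpa using ((SemiconjBy.conj_mk s⁻¹ x).orderOf_eq s⁻¹).symm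

lemma List.prod_ofFn_inv_mul_mul {G : Type*} [Group G] {k : ℕ} (s : G) (v : Fin k → G) :
    (List.ofFn fun i => s⁻¹ * v i * s).prod = s⁻¹ * (List.ofFn v).prod * s := by
  simpa [List.map_ofFn, Function.comp_def, MulAut.conj_apply] using
    (map_list_prod (MulAut.conj s⁻¹) (List.ofFn v)).symm

namespace MonoidHom

variable {G H : Type*} [Group G] [Group H] (f : G →* H)

lemma eq_of_map_eq_of_orderOf_eq_two (hcent : f.ker ≤ Subgroup.center G)
    (hodd : Odd (Nat.card f.ker)) {a b : G} (hab : f a = f b)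
    (ha : orderOf a = 2) (hb : orderOf b = 2) : a = b := by
  set z := a⁻¹ * b
  have hz : z ∈ f.ker := by simp [z, MonoidHom.mem_ker, hab]
  have hb_eq : b = a * z := by simp [z]
  have hz_sq : z ^ 2 = 1 := by
    have hcomm : Commute a z := Subgroup.mem_center_iff.mp (hcent hz) a
    have ha_sq : a ^ 2 = 1 := ha ▸ pow_orderOf_eq_one a
    have hb_sq : b ^ 2 = 1 := hb ▸ pow_orderOf_eq_one b
    rwa [hb_eq, hcomm.mul_pow, ha_sq, one_mul] at hb_sq
  have hz_card : z ^ Nat.card f.ker = 1 :=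
    congrArg Subtype.val (pow_card_eq_one' (x := (⟨z, hz⟩ : f.ker)))
  have hz_one : z = 1 :=
    (pow_eq_one_iff_of_coprime (Nat.coprime_two_left.mpr hodd)).mp ⟨hz_sq, hz_card⟩
  rw [hb_eq, hz_one, mul_one]

end MonoidHom

/-- If `g₁ ⋯ g_k = 1`, the lifting invariant `γ(g₁,…,g_k) = ĝ₁⋯ĝ_k` (product of
canonical order-2 lifts to a central triple cover `V` of `A₆`) is invariant
under simultaneous conjugation by any `t ∈ A₆` (the inner action). -/
theorem stmt_6 {V : Type*} [Group V] (π : V →* ↥(alternatingGroup (Fin 6)))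
    (hsurj : Function.Surjective π)
    (hcent : π.ker ≤ Subgroup.center V)
    (hker : Nat.card π.ker = 3)
    (lift : ↥(alternatingGroup (Fin 6)) → V)
    (hlift : ∀ x, orderOf x = 2 → π (lift x) = x ∧ orderOf (lift x) = 2)
    {k : ℕ} (g : Fin k → ↥(alternatingGroup (Fin 6)))
    (hg : ∀ i, orderOf (g i) = 2)
    (hprod : (List.ofFn g).prod = 1)
    (t : ↥(alternatingGroup (Fin 6))) :
    (List.ofFn fun i => lift (t⁻¹ * g i * t)).prod
      = (List.ofFn fun i => lift (g i)).prod := by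
  obtain ⟨τ, rfl⟩ := hsurj t
  have hodd : Odd (Nat.card π.ker) := by rw [hker]; decide
  have hlift_conj (i : Fin k) : lift ((π τ)⁻¹ * g i * π τ) = τ⁻¹ * lift (g i) * τ := by
    obtain ⟨hπ, hord⟩ := hlift _ (hg i)
    obtain ⟨hπ', hord'⟩ := hlift _ ((orderOf_inv_mul_mul _ _).trans (hg i))
    refine π.eq_of_map_eq_of_orderOf_eq_two hcent hodd ?_ hord' ?_
    · simp [hπ, hπ']
    · rw [orderOf_inv_mul_mul, hord]
  have hγ_central : (List.ofFn fun i => lift (g i)).prod ∈ Subgroup.center V := by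
    refine hcent ?_
    simp [MonoidHom.mem_ker, map_list_prod, List.map_ofFn, Function.comp_def, hlift _ (hg _),
      hprod]
  simp only [hlift_conj, List.prod_ofFn_inv_mul_mul]
  rw [mul_assoc, ← Subgroup.mem_center_iff.mp hγ_central τ, inv_mul_cancel_left]
end

section
/- Let V be a group and π : V → A6 a surjective group homomorphism whose kernel is a central subgroup of V of order 3, and for a tuple of order-2 elements of A6 let γ denote the product in V of their canonical order-2 lifts. Let (g_1,…,g_k) be a tuple of order-2 elements of A6 with g_1 g_2 ⋯ g_k = 1 and Fix(g_1) = Fix(g_2). If g_1 = g_2 (2-reduction), then γ(g_3,…,g_k) = γ(g_1,…,g_k). If g_1 ≠ g_2 (1-reduction), then g_1 g_2 has order 2 and γ(g_1 g_2, g_3,…,g_k) = γ(g_1,…,g_k). -/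
/-!
Two involutions of `A₆` with the same fixed points have the same support, of size at most `4`
since an even involution moves a multiple of `4` points; on at most four points two involutions
with equal support commute, so `g₁ g₂` is again an involution when `g₁ ≠ g₂`. As the kernel of
`π` is central of odd order, an element of `A₆` has at most one involutive preimage, and the
product of involutive preimages of `g₁` and `g₂` is again an involution. Hence
`lift (g₁ g₂) = lift g₁ * lift g₂`.
-/

open Finset

namespace Equiv.Perm

theorem apply_apply_of_sq_eq_one {α : Type*} {σ : Perm α} (hσ : σ ^ 2 = 1) (x : α) :
    σ (σ x) = x := by
  rw [← mul_apply, ← sq, hσ, one_apply]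

variable {α : Type*} [Fintype α] [DecidableEq α]

theorem four_dvd_card_support_of_sq_eq_one {σ : Perm α} (hσ : σ ^ 2 = 1) (hsign : sign σ = 1) :
    4 ∣ #σ.support := by
  have hrep := cycleType_of_pow_prime_eq_one (p := 2) hσ
  set m := Multiset.card σ.cycleType
  have hcard : #σ.support = 2 * m := by
    rw [← sum_cycleType, hrep, Multiset.sum_replicate, smul_eq_mul, mul_comm]
  rw [sign_of_cycleType, sum_cycleType, hcard] at hsign
  obtain ⟨k, hk⟩ := (neg_one_pow_eq_one_iff_even (by decide)).mp hsign
  omega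

variable {σ τ : Perm α}

theorem apply_apply_notMem_of_apply_ne (hσ : σ ^ 2 = 1) (hsupp : σ.support = τ.support)
    {x : α} (hx : x ∈ σ.support) (hne : σ x ≠ τ x) :
    σ (τ x) ∈ σ.support \ {x, σ x, τ x} := by
  have hτx : τ x ∈ σ.support := by rw [hsupp, apply_mem_support, ← hsupp]; exact hx
  simp only [mem_sdiff, mem_insert, mem_singleton, not_or]
  refine ⟨apply_mem_support.mpr hτx, fun h => hne ?_, fun h => ?_, mem_support.mp hτx⟩
  · exact (congrArg σ h).symm.trans (apply_apply_of_sq_eq_one hσ _)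
  · exact mem_support.mp (hsupp ▸ hx) (σ.injective h)

/-- Off the points where they agree, `x, σ x, τ x` already fill three places of the support,
and both `σ (τ x)` and `τ (σ x)` must be the remaining one. -/
theorem commute_of_support_eq (hσ : σ ^ 2 = 1) (hτ : τ ^ 2 = 1)
    (hsupp : σ.support = τ.support) (hcard : #σ.support ≤ 4) : Commute σ τ := by
  refine Equiv.ext fun x => ?_
  simp only [mul_apply]
  by_cases hx : x ∈ σ.support
  · by_cases heq : σ x = τ x
    · rw [← heq, apply_apply_of_sq_eq_one hσ, heq, apply_apply_of_sq_eq_one hτ]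
    have hx' : x ∈ τ.support := hsupp ▸ hx
    have h₁ := apply_apply_notMem_of_apply_ne hσ hsupp hx heq
    have h₂ := apply_apply_notMem_of_apply_ne hτ hsupp.symm hx' (Ne.symm heq)
    rw [← hsupp, pair_comm (τ x)] at h₂
    have hsub : ({x, σ x, τ x} : Finset α) ⊆ σ.support := by
      simp only [insert_subset_iff, singleton_subset_iff, apply_mem_support, hx, true_and]
      exact hsupp ▸ apply_mem_support.mpr hx'
    have hthree : #({x, σ x, τ x} : Finset α) = 3 := by
      rw [card_insert_of_notMem, card_pair heq]
      simp only [mem_insert, mem_singleton, not_or]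
      exact ⟨(mem_support.mp hx).symm, (mem_support.mp hx').symm⟩
    have hone : #(σ.support \ {x, σ x, τ x}) ≤ 1 := by
      rw [card_sdiff_of_subset hsub, hthree]; omega
    exact card_le_one.mp hone _ h₁ _ h₂
  · have hσx : σ x = x := notMem_support.mp hx
    have hτx : τ x = x := notMem_support.mp (hsupp ▸ hx)
    rw [hσx, hτx, hσx]

end Equiv.Perm

theorem Subgroup.eq_one_of_sq_eq_one_of_odd_card {G : Type*} [Group G] {H : Subgroup G}
    (hH : Odd (Nat.card H)) {c : G} (hc : c ∈ H) (h2 : c ^ 2 = 1) : c = 1 :=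
  orderOf_eq_one_iff.mp <| Nat.eq_one_of_dvd_coprimes (Nat.coprime_two_left.mpr hH)
    (orderOf_dvd_of_pow_eq_one h2) (orderOf_dvd_natCard H hc)

theorem Commute.orderOf_mul_eq_two {G : Type*} [Group G] {a b : G} (h : Commute a b)
    (ha : a ^ 2 = 1) (hb : b ^ 2 = 1) (hne : a ≠ b) : orderOf (a * b) = 2 := by
  refine orderOf_eq_prime (by rw [h.mul_pow, ha, hb, one_mul]) fun hab => hne ?_
  rw [eq_inv_of_mul_eq_one_left hab, inv_eq_of_mul_eq_one_left (by rwa [← sq])]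

section CentralKernel

variable {V G : Type*} [Group V] [Group G] (π : V →* G)
  (hcent : π.ker ≤ Subgroup.center V) (hodd : Odd (Nat.card π.ker))
include hcent hodd

theorem MonoidHom.eq_of_sq_eq_one_of_map_eq {a b : V} (ha : a ^ 2 = 1) (hb : b ^ 2 = 1)
    (hab : π a = π b) : a = b := by
  have hd : a * b⁻¹ ∈ π.ker := by rw [mem_ker, map_mul, map_inv, hab, mul_inv_cancel]
  have hcomm : Commute (a * b⁻¹) b := (Subgroup.mem_center_iff.mp (hcent hd) b).symm
  have hsq : (a * b⁻¹) ^ 2 = 1 := by simpa [ha, hb] using (hcomm.mul_pow 2).symm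
  exact mul_inv_eq_one.mp (Subgroup.eq_one_of_sq_eq_one_of_odd_card hodd hd hsq)

/-- `(x y)²` lies in the central kernel, and conjugation by `x` inverts it. -/
theorem MonoidHom.mul_sq_eq_one_of_map {x y : V} (hx : x ^ 2 = 1) (hy : y ^ 2 = 1)
    (hxy : (π x * π y) ^ 2 = 1) : (x * y) ^ 2 = 1 := by
  have hc : (x * y) ^ 2 ∈ π.ker := by rw [mem_ker, map_pow, map_mul, hxy]
  have hxx : x * x = 1 := by rw [← sq, hx]
  have hconj : x * (x * y) ^ 2 * x⁻¹ = ((x * y) ^ 2)⁻¹ := by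
    rw [inv_eq_of_mul_eq_one_left hxx, sq, mul_inv_rev, mul_inv_rev,
      inv_eq_of_mul_eq_one_left hxx, inv_eq_of_mul_eq_one_left (by rw [← sq, hy])]
    simp only [← mul_assoc, hxx, one_mul]
  rw [Subgroup.mem_center_iff.mp (hcent hc) x, mul_inv_cancel_right] at hconj
  exact Subgroup.eq_one_of_sq_eq_one_of_odd_card hodd hc
    ((sq _).trans (mul_eq_one_iff_eq_inv.mpr hconj))

end CentralKernel

theorem Equiv.Perm.support_eq_of_fixedPts_eq {n : ℕ} {σ τ : Equiv.Perm (Fin n)}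
    (h : FixedPts σ = FixedPts τ) : σ.support = τ.support := by
  ext a
  simp only [Equiv.Perm.mem_support]
  exact not_congr (Set.ext_iff.mp h a)

namespace alternatingGroup

theorem card_support_le_four_of_sq_eq_one {g : Equiv.Perm (Fin 6)}
    (hg : g ∈ alternatingGroup (Fin 6)) (h2 : g ^ 2 = 1) : #g.support ≤ 4 := by
  have h4 := Equiv.Perm.four_dvd_card_support_of_sq_eq_one h2
    (Equiv.Perm.mem_alternatingGroup.mp hg)
  have h6 : #g.support ≤ 6 := by simpa using card_le_univ g.support
  omega

theorem commute_of_fixedPts_eq {g₁ g₂ : alternatingGroup (Fin 6)} (h₁ : g₁ ^ 2 = 1)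
    (h₂ : g₂ ^ 2 = 1)
    (hfix : FixedPts (g₁ : Equiv.Perm (Fin 6)) = FixedPts (g₂ : Equiv.Perm (Fin 6))) :
    Commute g₁ g₂ := by
  have h₁' : (g₁ : Equiv.Perm (Fin 6)) ^ 2 = 1 := by simpa using congrArg Subtype.val h₁
  have h₂' : (g₂ : Equiv.Perm (Fin 6)) ^ 2 = 1 := by simpa using congrArg Subtype.val h₂
  exact Subtype.ext <| Equiv.Perm.commute_of_support_eq h₁' h₂'
    (Equiv.Perm.support_eq_of_fixedPts_eq hfix) (card_support_le_four_of_sq_eq_one g₁.2 h₁')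

end alternatingGroup

theorem stmt_14_general {V : Type*} [Group V] (π : V →* ↥(alternatingGroup (Fin 6)))
    (hcent : π.ker ≤ Subgroup.center V)
    (hker : Nat.card π.ker = 3)
    (lift : ↥(alternatingGroup (Fin 6)) → V)
    (hlift : ∀ x, orderOf x = 2 → π (lift x) = x ∧ orderOf (lift x) = 2)
    (g₁ g₂ : ↥(alternatingGroup (Fin 6))) (rest : List ↥(alternatingGroup (Fin 6)))
    (ho₁ : orderOf g₁ = 2) (ho₂ : orderOf g₂ = 2)
    (hfix : FixedPts (g₁ : Equiv.Perm (Fin 6)) = FixedPts (g₂ : Equiv.Perm (Fin 6))) :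
    (g₁ = g₂ → (rest.map lift).prod = ((g₁ :: g₂ :: rest).map lift).prod) ∧
    (g₁ ≠ g₂ → orderOf (g₁ * g₂) = 2 ∧
      ((g₁ * g₂ :: rest).map lift).prod = ((g₁ :: g₂ :: rest).map lift).prod) := by
  have hodd : Odd (Nat.card π.ker) := by rw [hker]; decide
  have sq_lift (x) (hx : orderOf x = 2) : lift x ^ 2 = 1 :=
    (orderOf_eq_prime_iff.mp (hlift x hx).2).1
  have sq₁ := (orderOf_eq_prime_iff.mp ho₁).1
  have sq₂ := (orderOf_eq_prime_iff.mp ho₂).1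
  refine ⟨?_, fun hne => ?_⟩
  · rintro rfl
    simp only [List.map_cons, List.prod_cons, ← mul_assoc, ← sq, sq_lift g₁ ho₁, one_mul]
  have hord : orderOf (g₁ * g₂) = 2 :=
    (alternatingGroup.commute_of_fixedPts_eq sq₁ sq₂ hfix).orderOf_mul_eq_two sq₁ sq₂ hne
  have hmap : π (lift g₁) * π (lift g₂) = g₁ * g₂ := by rw [(hlift g₁ ho₁).1, (hlift g₂ ho₂).1]
  have hlift_mul : lift (g₁ * g₂) = lift g₁ * lift g₂ :=
    π.eq_of_sq_eq_one_of_map_eq hcent hodd (sq_lift _ hord)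
      (π.mul_sq_eq_one_of_map hcent hodd (sq_lift g₁ ho₁) (sq_lift g₂ ho₂)
        (hmap ▸ (orderOf_eq_prime_iff.mp hord).1))
      (by rw [(hlift _ hord).1, map_mul, hmap])
  refine ⟨hord, ?_⟩
  simp only [List.map_cons, List.prod_cons, hlift_mul, mul_assoc]

/-- Behaviour of the lifting invariant `γ` (product of canonical order-2 lifts
to a central triple cover `V` of `A₆`) under `2`-reductions and `1`-reductions:
given order-2 elements `g₁, g₂` with the same fixed points heading a tuple of
order-2 elements with product `1`, if `g₁ = g₂` then dropping them preserves
`γ`; if `g₁ ≠ g₂` then `g₁ g₂` has order `2` and replacing the pair by the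
product preserves `γ`. -/
theorem stmt_14 {V : Type*} [Group V] (π : V →* ↥(alternatingGroup (Fin 6)))
    (hsurj : Function.Surjective π)
    (hcent : π.ker ≤ Subgroup.center V)
    (hker : Nat.card π.ker = 3)
    (lift : ↥(alternatingGroup (Fin 6)) → V)
    (hlift : ∀ x, orderOf x = 2 → π (lift x) = x ∧ orderOf (lift x) = 2)
    (g₁ g₂ : ↥(alternatingGroup (Fin 6))) (rest : List ↥(alternatingGroup (Fin 6)))
    (ho₁ : orderOf g₁ = 2) (ho₂ : orderOf g₂ = 2)
    (hor : ∀ x ∈ rest, orderOf x = 2)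
    (hprod : (g₁ :: g₂ :: rest).prod = 1)
    (hfix : FixedPts (g₁ : Equiv.Perm (Fin 6)) = FixedPts (g₂ : Equiv.Perm (Fin 6))) :
    (g₁ = g₂ → (rest.map lift).prod = ((g₁ :: g₂ :: rest).map lift).prod) ∧
    (g₁ ≠ g₂ → orderOf (g₁ * g₂) = 2 ∧
      ((g₁ * g₂ :: rest).map lift).prod = ((g₁ :: g₂ :: rest).map lift).prod) :=
  stmt_14_general π hcent hker lift hlift g₁ g₂ rest ho₁ ho₂ hfix
end

section
/- Let G be a finite group equipped with a linear order ≤ on its elements. Then every k-tuple (g_1,…,g_k) of elements of G is Hurwitz-equivalent to a tuple (h_1,…,h_k) that is nondecreasing, i.e., h_1 ≤ h_2 ≤ ⋯ ≤ h_k. -/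
/-!
Order `k`-tuples lexicographically; since `G` is finite this is a well-founded order. If a
tuple is not nondecreasing it has an adjacent descent `g (i + 1) < g i`, and the `i`-th Hurwitz
move replaces `g i` by `g (i + 1)` without touching the earlier entries, producing a
lexicographically smaller tuple. Well-founded induction finishes the proof.
-/

theorem Fin.exists_succ_lt_of_not_monotone {α : Type*} [LinearOrder α] {k : ℕ} {f : Fin k → α}
    (hf : ¬Monotone f) :
    ∃ (i : ℕ) (hi : i + 1 < k), f ⟨i + 1, hi⟩ < f ⟨i, Nat.lt_of_succ_lt hi⟩ := by
  cases k with
  | zero => exact absurd (fun a => a.elim0) hf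
  | succ n =>
    obtain ⟨i, hi⟩ := not_forall.mp (mt Fin.monotone_iff_le_succ.mpr hf)
    exact ⟨i, by omega, not_le.mp hi⟩

section HurwitzMoveAt

variable {G : Type*} [Group G] {k : ℕ}

def hurwitzMoveAt (g : Fin k → G) (i : ℕ) (hi : i + 1 < k) : Fin k → G := fun j =>
  if (j : ℕ) = i then g ⟨i + 1, hi⟩
  else if (j : ℕ) = i + 1 then (g ⟨i + 1, hi⟩)⁻¹ * g ⟨i, Nat.lt_of_succ_lt hi⟩ * g ⟨i + 1, hi⟩
  else g j

theorem hurwitzMove_hurwitzMoveAt (g : Fin k → G) (i : ℕ) (hi : i + 1 < k) :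
    HurwitzMove g (hurwitzMoveAt g i hi) :=
  ⟨i, hi, by simp [hurwitzMoveAt], by simp [hurwitzMoveAt],
    fun j hj hj' => by simp [hurwitzMoveAt, hj, hj']⟩

theorem toLex_hurwitzMoveAt_lt [LinearOrder G] (g : Fin k → G) (i : ℕ) (hi : i + 1 < k)
    (hlt : g ⟨i + 1, hi⟩ < g ⟨i, Nat.lt_of_succ_lt hi⟩) :
    toLex (hurwitzMoveAt g i hi) < toLex g := by
  refine ⟨⟨i, Nat.lt_of_succ_lt hi⟩, fun j (hj : (j : ℕ) < i) => ?_, by simpa [hurwitzMoveAt]⟩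
  simp [hurwitzMoveAt, hj.ne, (hj.trans i.lt_succ_self).ne]

end HurwitzMoveAt

/-- In a finite group with a linear order, every `k`-tuple is
Hurwitz-equivalent to a nondecreasing one. -/
theorem stmt_19 {G : Type*} [Group G] [Finite G] [LinearOrder G]
    (k : ℕ) (g : Fin k → G) :
    ∃ h : Fin k → G, HurwitzEquiv g h ∧ Monotone h := by
  suffices ∀ x : Lex (Fin k → G), ∃ h, HurwitzEquiv (ofLex x) h ∧ Monotone h from this (toLex g)
  intro x
  induction x using WellFoundedLT.induction with
  | _ x ih =>
    by_cases hmono : Monotone (ofLex x)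
    · exact ⟨ofLex x, Relation.EqvGen.refl _, hmono⟩
    obtain ⟨i, hi, hlt⟩ := Fin.exists_succ_lt_of_not_monotone hmono
    obtain ⟨h, hequiv, hh⟩ := ih _ (toLex_hurwitzMoveAt_lt _ i hi hlt)
    exact ⟨h, (Relation.EqvGen.rel _ _ (hurwitzMove_hurwitzMoveAt _ i hi)).trans _ _ _ hequiv, hh⟩
end
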